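/- Let Γ be a Blackwell game and let i be a player whose payoff function f_i is tail-measurable. Then player i's minmax value and maxmin value are independent of the history: v̄_i = v̄_i(h) and v_i = v_i(h) for every history h ∈ H. -/

import Mathlib

open MeasureTheory

namespace Blackwell

/-- The set of plays: infinite streams of action profiles. -/
abbrev Play {ι : Type*} (Ac : ι → Type*) : Type _ := ℕ → ∀ j, Ac j

/-- A behavior strategy of player `i`: a mixed action after every finite history.
A history of length `t` is encoded by the first `t` coordinates of a play, and the
strategy is required to depend only on these coordinates. -/
structure Strategy {ι : Type*} (Ac : ι → Type*) (i : ι) where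
  act : ℕ → Play Ac → PMF (Ac i)
  depends_on_past : ∀ (t : ℕ) (p q : Play Ac), (∀ s, s < t → p s = q s) → act t p = act t q

/-- A strategy profile: a behavior strategy for every player. -/
abbrev Profile {ι : Type*} (Ac : ι → Type*) : Type _ := ∀ i, Strategy Ac i

/-- The assignment, to each strategy profile `σ`, of the induced (Ionescu–Tulcea)
probability measure `P_σ` on the set of plays; it is uniquely characterized by the
probabilities it assigns to cylinder sets. -/
structure PlayMeasure {ι : Type*} [Fintype ι] (Ac : ι → Type*)
    [∀ i, MeasurableSpace (Ac i)] where
  μ : Profile Ac → Measure (Play Ac)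
  isProb : ∀ σ, IsProbabilityMeasure (μ σ)
  cyl : ∀ (σ : Profile Ac) (n : ℕ) (p : Play Ac),
    μ σ {q | ∀ t, t < n → q t = p t}
      = ∏ t ∈ Finset.range n, ∏ i, ((σ i).act t p) (p t i)

variable {ι : Type*} [Fintype ι] [DecidableEq ι] [Nonempty ι]
  {Ac : ι → Type*} [∀ i, Fintype (Ac i)] [∀ i, Nonempty (Ac i)]
  [∀ i, MeasurableSpace (Ac i)] [∀ i, DiscreteMeasurableSpace (Ac i)]

/-- The expected payoff `E_σ[f]` of a strategy profile `σ` for payoff function `f`. -/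
noncomputable def expPay (PM : PlayMeasure Ac) (σ : Profile Ac) (f : Play Ac → ℝ) : ℝ :=
  ∫ p, f p ∂(PM.μ σ)

/-- Concatenation of the history given by the first `n` coordinates of `h` with the play `q`. -/
def splice (n : ℕ) (h q : Play Ac) : Play Ac := fun t => if t < n then h t else q (t - n)

/-- The continuation of a strategy in the subgame that starts at the history
given by the first `n` coordinates of `h`. -/
def Strategy.shift {i : ι} (σi : Strategy Ac i) (n : ℕ) (h : Play Ac) : Strategy Ac i where
  act t q := σi.act (n + t) (splice n h q)
  depends_on_past := by
    intro t p q hpq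
    refine σi.depends_on_past _ _ _ ?_
    intro s hs
    simp only [splice]
    by_cases hsn : s < n
    · simp [hsn]
    · simp only [if_neg hsn]
      exact hpq (s - n) (by omega)

/-- The expected payoff `E_σ[f ∣ h]` in the subgame that starts at the history
given by the first `n` coordinates of `h`. -/
noncomputable def subExp (PM : PlayMeasure Ac) (σ : Profile Ac) (f : Play Ac → ℝ)
    (n : ℕ) (h : Play Ac) : ℝ :=
  ∫ q, f (splice n h q) ∂(PM.μ (fun i => (σ i).shift n h))

/-- The minmax value of player `i`. -/
noncomputable def minmax (PM : PlayMeasure Ac) (f : Play Ac → ℝ) (i : ι) : ℝ :=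
  ⨅ τ : Profile Ac, ⨆ σi : Strategy Ac i, expPay PM (Function.update τ i σi) f

/-- The maxmin value of player `i`. -/
noncomputable def maxmin (PM : PlayMeasure Ac) (f : Play Ac → ℝ) (i : ι) : ℝ :=
  ⨆ σi : Strategy Ac i, ⨅ τ : Profile Ac, expPay PM (Function.update τ i σi) f

/-- The minmax value of player `i` in the subgame that starts at the history
given by the first `n` coordinates of `h`. -/
noncomputable def subMinmax (PM : PlayMeasure Ac) (f : Play Ac → ℝ) (i : ι)
    (n : ℕ) (h : Play Ac) : ℝ :=
  ⨅ τ : Profile Ac, ⨆ σi : Strategy Ac i, subExp PM (Function.update τ i σi) f n h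

/-- The maxmin value of player `i` in the subgame that starts at the history
given by the first `n` coordinates of `h`. -/
noncomputable def subMaxmin (PM : PlayMeasure Ac) (f : Play Ac → ℝ) (i : ι)
    (n : ℕ) (h : Play Ac) : ℝ :=
  ⨆ σi : Strategy Ac i, ⨅ τ : Profile Ac, subExp PM (Function.update τ i σi) f n h

/-- A strategy profile `σ` is an `ε`-equilibrium if no player can gain more than `ε`
by a unilateral deviation. -/
def IsEpsEquilibrium (PM : PlayMeasure Ac) (f : ι → Play Ac → ℝ) (ε : ℝ)
    (σ : Profile Ac) : Prop :=
  ∀ (i : ι) (σi : Strategy Ac i),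
    expPay PM (Function.update σ i σi) (f i) ≤ expPay PM σ (f i) + ε

/-- A payoff function is tail-measurable if changing finitely many coordinates of the
play does not change its value. -/
def TailMeasurable (f : Play Ac → ℝ) : Prop :=
  ∀ p q : Play Ac, (∃ N, ∀ t, N ≤ t → p t = q t) → f p = f q

/-- A payoff function is bounded. -/
def BddPayoff (f : Play Ac → ℝ) : Prop := ∃ C, ∀ p, |f p| ≤ C

/-!
Fix `n`. Conditioning on the first `n` stages writes `P_σ` as the mixture, over the
histories `w` of length `n` and with the probabilities of their cylinders as weights, of the
laws of the continuation profiles `σ.shift n w`, pushed forward along `splice n w`. Hence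
`E_σ[f]` is a convex combination of the subgame payoffs `E_σ[f ∣ w]`. If `f` is tail-measurable,
then `f ∘ splice n w` does not depend on `w`: every subgame after a history of length `n` is the
game with payoff `g = f ∘ splice n h`, whose minmax and maxmin values are those of the subgame
at `h`. Strategies for the subgames after the different histories can be chosen independently
and glued into a strategy of the whole game, so the minmax (maxmin) value of `f` can neither
exceed nor fall short of that of `g`.
-/

open Set PiNat Function

section Plays

omit [Fintype ι] [DecidableEq ι] [Nonempty ι] [∀ i, Fintype (Ac i)] [∀ i, Nonempty (Ac i)]
  [∀ i, MeasurableSpace (Ac i)] [∀ i, DiscreteMeasurableSpace (Ac i)]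

theorem Strategy.ext {i : ι} {σi τi : Strategy Ac i} (h : σi.act = τi.act) : σi = τi := by
  cases σi; cases τi; cases h; rfl

instance {i : ι} : Nonempty (Strategy Ac i) :=
  ⟨⟨fun _ _ => PMF.pure (Classical.arbitrary _), fun _ _ _ _ => rfl⟩⟩

theorem splice_of_lt {n t : ℕ} (h q : Play Ac) (ht : t < n) : splice n h q t = h t := if_pos ht

theorem splice_add (n : ℕ) (h q : Play Ac) (s : ℕ) : splice n h q (n + s) = q s := by
  simp [splice]

theorem splice_self (n : ℕ) (p : Play Ac) : splice n p (fun s => p (n + s)) = p := by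
  funext t
  by_cases ht : t < n
  · exact splice_of_lt _ _ ht
  · obtain ⟨s, rfl⟩ := Nat.exists_eq_add_of_le (not_lt.1 ht)
    exact splice_add _ _ _ _

theorem splice_congr {n : ℕ} {h h' : Play Ac} (hh : ∀ t < n, h t = h' t) (q : Play Ac) :
    splice n h q = splice n h' q := by
  funext t
  by_cases ht : t < n
  · simp only [splice, if_pos ht, hh t ht]
  · simp only [splice, if_neg ht]

theorem measurable_splice [∀ i, MeasurableSpace (Ac i)] (n : ℕ) (h : Play Ac) :
    Measurable (splice n h) := by
  refine measurable_pi_iff.2 fun t => ?_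
  by_cases ht : t < n
  · simp only [splice, if_pos ht, measurable_const]
  · simp only [splice, if_neg ht]
    exact measurable_pi_apply _

theorem TailMeasurable.apply_splice_eq {f : Play Ac → ℝ} (hf : TailMeasurable f) (n : ℕ)
    (h h' q : Play Ac) : f (splice n h q) = f (splice n h' q) :=
  hf _ _ ⟨n, fun t ht => by simp [splice, not_lt.2 ht]⟩

theorem Strategy.shift_congr {i : ι} (σi : Strategy Ac i) {n : ℕ} {h h' : Play Ac}
    (hh : ∀ t < n, h t = h' t) : σi.shift n h = σi.shift n h' :=
  Strategy.ext <| funext fun t => funext fun q => by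
    simp only [Strategy.shift, splice_congr hh]

noncomputable def Strategy.glue {i : ι} (n : ℕ)
    (F : (Fin n → ∀ j, Ac j) → Strategy Ac i) : Strategy Ac i where
  act t p := if t < n then PMF.pure (Classical.arbitrary (Ac i))
    else (F fun s => p s).act (t - n) fun s => p (s + n)
  depends_on_past t p q hpq := by
    by_cases ht : t < n
    · simp only [if_pos ht]
    · have hw : (fun s : Fin n => p s) = fun s : Fin n => q s :=
        funext fun s => hpq s (by omega)
      simp only [if_neg ht, hw]
      exact (F _).depends_on_past _ _ _ fun s hs => hpq (s + n) (by omega)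

theorem Strategy.shift_glue [∀ i, Nonempty (Ac i)] {i : ι} (n : ℕ)
    (F : (Fin n → ∀ j, Ac j) → Strategy Ac i) (h : Play Ac) :
    (glue n F).shift n h = F fun s : Fin n => h s := by
  refine Strategy.ext (funext fun t => funext fun q => ?_)
  have hprefix : (fun s : Fin n => splice n h q s) = fun s : Fin n => h s :=
    funext fun s => splice_of_lt _ _ s.2
  have htail : (fun s => splice n h q (s + n)) = q :=
    funext fun s => by rw [add_comm, splice_add]
  simp [Strategy.shift, glue, hprefix, htail]

theorem Strategy.shift_surjective [∀ i, Nonempty (Ac i)] (i : ι) (n : ℕ) (h : Play Ac) :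
    Surjective fun σi : Strategy Ac i => σi.shift n h :=
  fun ρ => ⟨glue n fun _ => ρ, shift_glue n _ h⟩

def Profile.shift (σ : Profile Ac) (n : ℕ) (h : Play Ac) : Profile Ac :=
  fun j => (σ j).shift n h

theorem Profile.shift_update [DecidableEq ι] (τ : Profile Ac) (i : ι) (σi : Strategy Ac i)
    (n : ℕ) (h : Play Ac) :
    Profile.shift (update τ i σi) n h = update (Profile.shift τ n h) i (σi.shift n h) :=
  funext fun j => apply_update (fun k (s : Strategy Ac k) => s.shift n h) τ i σi j

theorem Profile.shift_congr (σ : Profile Ac) {n : ℕ} {h h' : Play Ac}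
    (hh : ∀ t < n, h t = h' t) : Profile.shift σ n h = Profile.shift σ n h' :=
  funext fun j => (σ j).shift_congr hh

noncomputable def Profile.glue (n : ℕ) (F : (Fin n → ∀ j, Ac j) → Profile Ac) : Profile Ac :=
  fun j => Strategy.glue n fun w => F w j

theorem Profile.shift_glue [∀ i, Nonempty (Ac i)] (n : ℕ)
    (F : (Fin n → ∀ j, Ac j) → Profile Ac) (h : Play Ac) :
    Profile.shift (glue n F) n h = F fun s : Fin n => h s :=
  funext fun _ => Strategy.shift_glue n _ h

theorem Profile.shift_surjective [∀ i, Nonempty (Ac i)] (n : ℕ) (h : Play Ac) :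
    Surjective fun σ : Profile Ac => Profile.shift σ n h :=
  fun τ => ⟨glue n fun _ => τ, shift_glue n _ h⟩

noncomputable def playOfHistory {n : ℕ} (w : Fin n → ∀ j, Ac j) : Play Ac :=
  fun t => if ht : t < n then w ⟨t, ht⟩ else fun j => Classical.arbitrary (Ac j)

theorem playOfHistory_of_lt [∀ i, Nonempty (Ac i)] {n t : ℕ} (w : Fin n → ∀ j, Ac j)
    (ht : t < n) : playOfHistory w t = w ⟨t, ht⟩ := dif_pos ht

theorem mem_cylinder_playOfHistory [∀ i, Nonempty (Ac i)] (n : ℕ) (p : Play Ac) :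
    p ∈ cylinder (playOfHistory fun s : Fin n => p s) n :=
  fun _ ht => (playOfHistory_of_lt (fun s : Fin n => p s) ht).symm

theorem pairwise_disjoint_cylinder_playOfHistory [∀ i, Nonempty (Ac i)] (n : ℕ) :
    Pairwise (Disjoint on fun w : Fin n → ∀ j, Ac j => cylinder (playOfHistory w) n) := by
  intro w w' hne
  refine Set.disjoint_left.2 fun q hq hq' => hne (funext fun s => ?_)
  rw [← playOfHistory_of_lt w s.2, ← playOfHistory_of_lt w' s.2, ← hq s s.2, ← hq' s s.2]

theorem iUnion_cylinder_playOfHistory [∀ i, Nonempty (Ac i)] (n : ℕ) :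
    ⋃ w : Fin n → ∀ j, Ac j, cylinder (playOfHistory w) n = univ :=
  eq_univ_of_forall fun p => mem_iUnion.2 ⟨_, mem_cylinder_playOfHistory n p⟩

theorem splice_preimage_cylinder {n : ℕ} {h p : Play Ac} (hp : ∀ t < n, h t = p t) (k : ℕ) :
    splice n h ⁻¹' cylinder p (n + k) = cylinder (fun s => p (n + s)) k := by
  ext q
  simp only [mem_preimage, mem_cylinder_iff]
  refine ⟨fun hq s hs => by simpa only [splice_add] using hq (n + s) (by omega),
    fun hq t ht => ?_⟩
  by_cases htn : t < n
  · rw [splice_of_lt _ _ htn, hp t htn]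
  · obtain ⟨s, rfl⟩ := Nat.exists_eq_add_of_le (not_lt.1 htn)
    rw [splice_add, hq s (by omega)]

theorem splice_preimage_cylinder_eq_empty {n : ℕ} {h p : Play Ac}
    (hp : ¬ ∀ t < n, h t = p t) (k : ℕ) : splice n h ⁻¹' cylinder p (n + k) = ∅ :=
  eq_empty_of_forall_notMem fun q hq =>
    hp fun t ht => by rw [← splice_of_lt h q ht, hq t (by omega)]

def cylindersFrom (n : ℕ) : Set (Set (Play Ac)) :=
  {C | ∃ (k : ℕ) (p : Play Ac), C = cylinder p (n + k)}

theorem isPiSystem_cylindersFrom (n : ℕ) : IsPiSystem (cylindersFrom (Ac := Ac) n) := by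
  rintro _ ⟨k, p, rfl⟩ _ ⟨k', p', rfl⟩ ⟨q, hq, hq'⟩
  rw [mem_cylinder_iff_eq] at hq hq'
  refine ⟨max k k', q, ?_⟩
  rw [← hq, ← hq']
  rcases le_total k k' with hk | hk
  · rw [max_eq_right hk, inter_eq_right.2 (cylinder_anti q (by omega))]
  · rw [max_eq_left hk, inter_eq_left.2 (cylinder_anti q (by omega))]

end Plays

section Payoffs

omit [Fintype ι] [DecidableEq ι] [Nonempty ι] [∀ i, Fintype (Ac i)] [∀ i, Nonempty (Ac i)]
  [∀ i, MeasurableSpace (Ac i)] [∀ i, DiscreteMeasurableSpace (Ac i)]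

instance (PM : PlayMeasure Ac) (σ : Profile Ac) : IsProbabilityMeasure (PM.μ σ) := PM.isProb σ

theorem BddPayoff.comp {f : Play Ac → ℝ} (hf : BddPayoff f) (φ : Play Ac → Play Ac) :
    BddPayoff fun p => f (φ p) :=
  let ⟨C, hC⟩ := hf
  ⟨C, fun p => hC (φ p)⟩

theorem BddPayoff.integrable [∀ i, MeasurableSpace (Ac i)] {f : Play Ac → ℝ} (hb : BddPayoff f)
    (hf : Measurable f) (μ : Measure (Play Ac)) [IsFiniteMeasure μ] : Integrable f μ :=
  let ⟨C, hC⟩ := hb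
  .of_bound hf.aestronglyMeasurable C (ae_of_all _ hC)

theorem abs_expPay_le [Fintype ι] [∀ i, MeasurableSpace (Ac i)] (PM : PlayMeasure Ac)
    (σ : Profile Ac) {f : Play Ac → ℝ} {C : ℝ} (hC : ∀ p, |f p| ≤ C) : |expPay PM σ f| ≤ C := by
  simpa [expPay] using norm_integral_le_of_norm_le_const (μ := PM.μ σ) (f := f) (ae_of_all _ hC)

end Payoffs

section Measures

omit [Nonempty ι]

omit [DecidableEq ι] [∀ i, Fintype (Ac i)] [∀ i, Nonempty (Ac i)] in
theorem measurableSet_cylinder (p : Play Ac) (n : ℕ) : MeasurableSet (cylinder p n) := by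
  rw [cylinder_eq_pi]
  exact MeasurableSet.pi (Set.to_countable _) fun _ _ => measurableSet_singleton _

theorem sum_measure_cylinder_playOfHistory (μ : Measure (Play Ac)) (n : ℕ) :
    ∑ w : Fin n → ∀ j, Ac j, μ (cylinder (playOfHistory w) n) = μ univ := by
  rw [← iUnion_cylinder_playOfHistory n, measure_iUnion
    (pairwise_disjoint_cylinder_playOfHistory n) fun w => measurableSet_cylinder _ n,
    tsum_fintype]

theorem sum_measureReal_cylinder_playOfHistory (μ : Measure (Play Ac)) [IsProbabilityMeasure μ]
    (n : ℕ) : ∑ w : Fin n → ∀ j, Ac j, μ.real (cylinder (playOfHistory w) n) = 1 := by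
  rw [← measureReal_iUnion_fintype (pairwise_disjoint_cylinder_playOfHistory n)
    fun w => measurableSet_cylinder _ n, iUnion_cylinder_playOfHistory, probReal_univ]

omit [DecidableEq ι] in
theorem generateFrom_cylindersFrom (n : ℕ) :
    MeasurableSpace.generateFrom (cylindersFrom n) = (inferInstance : MeasurableSpace (Play Ac)) := by
  refine le_antisymm (MeasurableSpace.generateFrom_le ?_) ?_
  · rintro _ ⟨k, p, rfl⟩
    exact measurableSet_cylinder p _
  show MeasurableSpace.pi ≤ _
  refine iSup_le fun t => ?_
  refine measurable_iff_comap_le.1 (@measurable_to_countable' (∀ j, Ac j) (Play Ac) _ _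
    (MeasurableSpace.generateFrom (cylindersFrom n)) (fun q => q t) fun v => ?_)
  have hcoord : (fun q : Play Ac => q t) ⁻¹' {v} = ⋃ (w : Fin (n + (t + 1)) → ∀ j, Ac j)
      (_ : w ⟨t, by omega⟩ = v), cylinder (playOfHistory w) (n + (t + 1)) := by
    ext q
    simp only [mem_preimage, mem_singleton_iff, mem_iUnion]
    constructor
    · rintro rfl
      exact ⟨fun s => q s, rfl, mem_cylinder_playOfHistory _ q⟩
    · rintro ⟨w, rfl, hq⟩
      rw [hq t (by omega), playOfHistory_of_lt]
  rw [hcoord]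
  exact MeasurableSet.iUnion fun w => MeasurableSet.iUnion fun _ =>
    MeasurableSpace.measurableSet_generateFrom ⟨t + 1, _, rfl⟩

omit [DecidableEq ι] [∀ i, Fintype (Ac i)] [∀ i, Nonempty (Ac i)]
  [∀ i, DiscreteMeasurableSpace (Ac i)] in
theorem PlayMeasure.measure_cylinder (PM : PlayMeasure Ac) (σ : Profile Ac) (n : ℕ)
    (p : Play Ac) : PM.μ σ (cylinder p n) = ∏ t ∈ Finset.range n, ∏ j, (σ j).act t p (p t j) :=
  PM.cyl σ n p

omit [DecidableEq ι] [∀ i, Fintype (Ac i)] [∀ i, Nonempty (Ac i)]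
  [∀ i, DiscreteMeasurableSpace (Ac i)] in
theorem PlayMeasure.measure_cylinder_add (PM : PlayMeasure Ac) (σ : Profile Ac) (n k : ℕ)
    (p : Play Ac) : PM.μ σ (cylinder p (n + k))
      = PM.μ σ (cylinder p n) * PM.μ (Profile.shift σ n p) (cylinder (fun s => p (n + s)) k) := by
  simp only [PM.measure_cylinder, Finset.prod_range_add]
  congr 1
  refine Finset.prod_congr rfl fun t _ => Finset.prod_congr rfl fun j _ => ?_
  simp only [Profile.shift, Strategy.shift, splice_self]

theorem PlayMeasure.eq_sum_map_splice (PM : PlayMeasure Ac) (σ : Profile Ac) (n : ℕ) :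
    PM.μ σ = ∑ w : Fin n → ∀ j, Ac j, PM.μ σ (cylinder (playOfHistory w) n) •
      (PM.μ (Profile.shift σ n (playOfHistory w))).map (splice n (playOfHistory w)) := by
  refine ext_of_generate_finite _ (generateFrom_cylindersFrom n).symm
    (isPiSystem_cylindersFrom n) ?_ ?_
  · rintro _ ⟨k, p, rfl⟩
    have hp : ∀ t < n, playOfHistory (fun s : Fin n => p s) t = p t :=
      fun t ht => playOfHistory_of_lt _ ht
    rw [Measure.finsetSum_apply, Finset.sum_eq_single (fun s : Fin n => p s) ?_ (by simp),
      Measure.smul_apply, Measure.map_apply (measurable_splice n _) (measurableSet_cylinder p _),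
      splice_preimage_cylinder hp, Profile.shift_congr σ hp,
      ← mem_cylinder_iff_eq.1 (mem_cylinder_playOfHistory n p), smul_eq_mul,
      PM.measure_cylinder_add]
    intro w _ hw
    have hwp : ¬ ∀ t < n, playOfHistory w t = p t := fun hwp =>
      hw (funext fun s => by rw [← playOfHistory_of_lt w s.2, hwp s s.2])
    rw [Measure.smul_apply, Measure.map_apply (measurable_splice n _) (measurableSet_cylinder p _),
      splice_preimage_cylinder_eq_empty hwp, measure_empty, smul_zero]
  · simp only [Measure.finsetSum_apply, Measure.smul_apply,
      Measure.map_apply (measurable_splice n _) MeasurableSet.univ, preimage_univ, measure_univ,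
      smul_eq_mul, mul_one, sum_measure_cylinder_playOfHistory]

end Measures

section Decomposition

omit [Nonempty ι]

variable (PM : PlayMeasure Ac) (σ : Profile Ac) {f : Play Ac → ℝ} (hf : Measurable f)
  (hb : BddPayoff f) (n : ℕ)
include hf hb

theorem expPay_eq_sum_subExp : expPay PM σ f = ∑ w : Fin n → ∀ j, Ac j,
    (PM.μ σ).real (cylinder (playOfHistory w) n) * subExp PM σ f n (playOfHistory w) := by
  rw [expPay]
  conv_lhs => rw [PM.eq_sum_map_splice σ n, integral_finsetSum_measure fun w _ =>
    (hb.integrable hf _).smul_measure (measure_ne_top _ _)]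
  refine Finset.sum_congr rfl fun w _ => ?_
  rw [integral_smul_measure, integral_map (measurable_splice n _).aemeasurable
    hf.aestronglyMeasurable, smul_eq_mul]
  rfl

theorem expPay_le_of_forall_subExp_le {B : ℝ} (hB : ∀ p, subExp PM σ f n p ≤ B) :
    expPay PM σ f ≤ B := by
  rw [expPay_eq_sum_subExp PM σ hf hb n]
  calc _ ≤ ∑ w : Fin n → ∀ j, Ac j, (PM.μ σ).real (cylinder (playOfHistory w) n) * B :=
        Finset.sum_le_sum fun w _ => mul_le_mul_of_nonneg_left (hB _) measureReal_nonneg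
    _ = B := by rw [← Finset.sum_mul, sum_measureReal_cylinder_playOfHistory, one_mul]

theorem le_expPay_of_forall_le_subExp {B : ℝ} (hB : ∀ p, B ≤ subExp PM σ f n p) :
    B ≤ expPay PM σ f := by
  rw [expPay_eq_sum_subExp PM σ hf hb n]
  calc B = ∑ w : Fin n → ∀ j, Ac j, (PM.μ σ).real (cylinder (playOfHistory w) n) * B := by
        rw [← Finset.sum_mul, sum_measureReal_cylinder_playOfHistory, one_mul]
    _ ≤ _ := Finset.sum_le_sum fun w _ => mul_le_mul_of_nonneg_left (hB _) measureReal_nonneg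

end Decomposition

section Values

omit [Nonempty ι] [∀ i, Fintype (Ac i)] [∀ i, DiscreteMeasurableSpace (Ac i)]

variable (PM : PlayMeasure Ac) {f : Play Ac → ℝ}

omit [DecidableEq ι] [∀ i, Nonempty (Ac i)] in
theorem BddPayoff.bddAbove_range_expPay (hb : BddPayoff f) {X : Type*} (F : X → Profile Ac) :
    BddAbove (range fun x => expPay PM (F x) f) :=
  let ⟨C, hC⟩ := hb
  ⟨C, by rintro _ ⟨x, rfl⟩; exact (abs_le.1 (abs_expPay_le PM _ hC)).2⟩

omit [DecidableEq ι] [∀ i, Nonempty (Ac i)] in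
theorem BddPayoff.bddBelow_range_expPay (hb : BddPayoff f) {X : Type*} (F : X → Profile Ac) :
    BddBelow (range fun x => expPay PM (F x) f) :=
  let ⟨C, hC⟩ := hb
  ⟨-C, by rintro _ ⟨x, rfl⟩; exact (abs_le.1 (abs_expPay_le PM _ hC)).1⟩

omit [DecidableEq ι] [∀ i, Nonempty (Ac i)] in
theorem BddPayoff.bddBelow_range_iSup_expPay (hb : BddPayoff f) {X Y : Type*} [Nonempty Y]
    (F : X → Y → Profile Ac) : BddBelow (range fun x => ⨆ y, expPay PM (F x y) f) := by
  obtain ⟨C, hC⟩ := id hb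
  refine ⟨-C, ?_⟩
  rintro _ ⟨x, rfl⟩
  obtain ⟨y⟩ := ‹Nonempty Y›
  exact (abs_le.1 (abs_expPay_le PM _ hC)).1.trans (le_ciSup (hb.bddAbove_range_expPay PM _) y)

omit [DecidableEq ι] [∀ i, Nonempty (Ac i)] in
theorem BddPayoff.bddAbove_range_iInf_expPay (hb : BddPayoff f) {X Y : Type*} [Nonempty Y]
    (F : X → Y → Profile Ac) : BddAbove (range fun x => ⨅ y, expPay PM (F x y) f) := by
  obtain ⟨C, hC⟩ := id hb
  refine ⟨C, ?_⟩
  rintro _ ⟨x, rfl⟩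
  obtain ⟨y⟩ := ‹Nonempty Y›
  exact (ciInf_le (hb.bddBelow_range_expPay PM _) y).trans (abs_le.1 (abs_expPay_le PM _ hC)).2

omit [DecidableEq ι] [∀ i, Nonempty (Ac i)] in
theorem subExp_eq_expPay_shift (σ : Profile Ac) (n : ℕ) (h : Play Ac) :
    subExp PM σ f n h = expPay PM (Profile.shift σ n h) fun q => f (splice n h q) :=
  rfl

omit [DecidableEq ι] [∀ i, Nonempty (Ac i)] in
theorem TailMeasurable.subExp_eq (htail : TailMeasurable f) (σ : Profile Ac) (n : ℕ)
    (p h : Play Ac) :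
    subExp PM σ f n p = expPay PM (Profile.shift σ n p) fun q => f (splice n h q) := by
  simp only [subExp_eq_expPay_shift, htail.apply_splice_eq n p h]

theorem subMinmax_eq_minmax_comp_splice (i : ι) (n : ℕ) (h : Play Ac) :
    subMinmax PM f i n h = minmax PM (fun q => f (splice n h q)) i := by
  simp only [subMinmax, subExp_eq_expPay_shift, Profile.shift_update]
  calc _ = ⨅ τ : Profile Ac, ⨆ ρ : Strategy Ac i,
        expPay PM (update (Profile.shift τ n h) i ρ) fun q => f (splice n h q) :=
        iInf_congr fun τ => (Strategy.shift_surjective i n h).iSup_comp fun ρ =>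
          expPay PM (update (Profile.shift τ n h) i ρ) fun q => f (splice n h q)
    _ = _ := (Profile.shift_surjective n h).iInf_comp fun τ => ⨆ ρ : Strategy Ac i,
        expPay PM (update τ i ρ) fun q => f (splice n h q)

theorem subMaxmin_eq_maxmin_comp_splice (i : ι) (n : ℕ) (h : Play Ac) :
    subMaxmin PM f i n h = maxmin PM (fun q => f (splice n h q)) i := by
  simp only [subMaxmin, subExp_eq_expPay_shift, Profile.shift_update]
  calc _ = ⨆ ρ : Strategy Ac i, ⨅ τ : Profile Ac,
        expPay PM (update τ i (ρ.shift n h)) fun q => f (splice n h q) :=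
        iSup_congr fun ρ => (Profile.shift_surjective n h).iInf_comp fun τ =>
          expPay PM (update τ i (ρ.shift n h)) fun q => f (splice n h q)
    _ = _ := (Strategy.shift_surjective i n h).iSup_comp fun ρ => ⨅ τ : Profile Ac,
        expPay PM (update τ i ρ) fun q => f (splice n h q)

end Values

section Tail

omit [Nonempty ι]

variable (PM : PlayMeasure Ac) {f : Play Ac → ℝ} (hf : Measurable f) (hb : BddPayoff f)
  (htail : TailMeasurable f) (i : ι) (n : ℕ) (h : Play Ac)
include hf hb htail

theorem minmax_le_minmax_comp_splice :
    minmax PM f i ≤ minmax PM (fun q => f (splice n h q)) i := by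
  refine le_ciInf fun τ => ciInf_le_of_le (hb.bddBelow_range_iSup_expPay PM fun τ ρ => update τ i ρ)
    (Profile.glue n fun _ => τ) (ciSup_le fun σi => expPay_le_of_forall_subExp_le PM _ hf hb n
      fun p => ?_)
  rw [htail.subExp_eq PM _ n p h, Profile.shift_update, Profile.shift_glue]
  exact le_ciSup ((hb.comp _).bddAbove_range_expPay PM _) _

theorem minmax_comp_splice_le_minmax :
    minmax PM (fun q => f (splice n h q)) i ≤ minmax PM f i := by
  refine le_ciInf fun τ => le_of_forall_pos_le_add fun ε hε => ?_
  have hbest : ∀ w : Fin n → ∀ j, Ac j, ∃ ρ, minmax PM (fun q => f (splice n h q)) i - ε <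
      expPay PM (update (Profile.shift τ n (playOfHistory w)) i ρ) fun q => f (splice n h q) :=
    fun w => exists_lt_of_lt_ciSup <| (sub_lt_self _ hε).trans_le <|
      ciInf_le ((hb.comp _).bddBelow_range_iSup_expPay PM fun τ ρ => update τ i ρ) _
  choose ρ hρ using hbest
  rw [← sub_le_iff_le_add]
  refine le_ciSup_of_le (hb.bddAbove_range_expPay PM _) (Strategy.glue n ρ)
    (le_expPay_of_forall_le_subExp PM _ hf hb n fun p => ?_)
  rw [htail.subExp_eq PM _ n p h, Profile.shift_update, Strategy.shift_glue,
    Profile.shift_congr τ fun t ht => (playOfHistory_of_lt (fun s : Fin n => p s) ht).symm]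
  exact (hρ _).le

theorem maxmin_le_maxmin_comp_splice :
    maxmin PM f i ≤ maxmin PM (fun q => f (splice n h q)) i := by
  refine ciSup_le fun σi => le_of_forall_pos_le_add fun ε hε => ?_
  have hbest : ∀ w : Fin n → ∀ j, Ac j, ∃ τ : Profile Ac,
      (expPay PM (update τ i (σi.shift n (playOfHistory w))) fun q => f (splice n h q)) <
        maxmin PM (fun q => f (splice n h q)) i + ε :=
    fun w => exists_lt_of_ciInf_lt <| (lt_add_of_pos_right _ hε).trans_le' <|
      le_ciSup ((hb.comp _).bddAbove_range_iInf_expPay PM fun ρ τ => update τ i ρ) _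
  choose τ hτ using hbest
  refine ciInf_le_of_le (hb.bddBelow_range_expPay PM _) (Profile.glue n τ)
    (expPay_le_of_forall_subExp_le PM _ hf hb n fun p => ?_)
  rw [htail.subExp_eq PM _ n p h, Profile.shift_update, Profile.shift_glue,
    σi.shift_congr fun t ht => (playOfHistory_of_lt (fun s : Fin n => p s) ht).symm]
  exact (hτ _).le

theorem maxmin_comp_splice_le_maxmin :
    maxmin PM (fun q => f (splice n h q)) i ≤ maxmin PM f i := by
  refine ciSup_le fun ρ => le_ciSup_of_le (hb.bddAbove_range_iInf_expPay PM fun ρ τ => update τ i ρ)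
    (Strategy.glue n fun _ => ρ) (le_ciInf fun τ => le_expPay_of_forall_le_subExp PM _ hf hb n
      fun p => ?_)
  rw [htail.subExp_eq PM _ n p h, Profile.shift_update, Strategy.shift_glue]
  exact ciInf_le ((hb.comp _).bddBelow_range_expPay PM _) _

theorem TailMeasurable.minmax_comp_splice :
    minmax PM (fun q => f (splice n h q)) i = minmax PM f i :=
  le_antisymm (minmax_comp_splice_le_minmax PM hf hb htail i n h)
    (minmax_le_minmax_comp_splice PM hf hb htail i n h)

theorem TailMeasurable.maxmin_comp_splice :
    maxmin PM (fun q => f (splice n h q)) i = maxmin PM f i :=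
  le_antisymm (maxmin_comp_splice_le_maxmin PM hf hb htail i n h)
    (maxmin_le_maxmin_comp_splice PM hf hb htail i n h)

end Tail

/-- If player `i`'s payoff function is tail-measurable, then her minmax
value and maxmin value are independent of the history. -/
theorem minmax_maxmin_indep_of_history (PM : PlayMeasure Ac) (f : ι → Play Ac → ℝ)
    (hbdd : ∀ j, BddPayoff (f j)) (hmeas : ∀ j, Measurable (f j))
    (i : ι) (htail : TailMeasurable (f i)) :
    (∀ (n : ℕ) (h : Play Ac), subMinmax PM (f i) i n h = minmax PM (f i) i) ∧
    (∀ (n : ℕ) (h : Play Ac), subMaxmin PM (f i) i n h = maxmin PM (f i) i) := by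
  exact ⟨fun n h => (subMinmax_eq_minmax_comp_splice PM i n h).trans
      (htail.minmax_comp_splice PM (hmeas i) (hbdd i) i n h),
    fun n h => (subMaxmin_eq_maxmin_comp_splice PM i n h).trans
      (htail.maxmin_comp_splice PM (hmeas i) (hbdd i) i n h)⟩

end Blackwell
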